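/- There exists η₂ > 0 such that for every fluid model (y, x) and Lebesgue-almost every t ≥ 0 with x(t) = -λ/β and y(t) ≥ γλ/ε, the function s ↦ ‖(y(s), x(s))‖_* is differentiable at t and its derivative at t is at most -η₂. -/

import Mathlib

/-! Write `a₁ = β/ν₁`, `a₂ = β/ν₂` and `α₁, α₂` for the coordinates of `(y, x)` in the basis
`v₁, v₂`, so that `α₁ + α₂ = -x`. On the boundary `x = -λ/β` with `εy ≥ γλ` the dynamics are
`y' = -λ`, `x' = 0`, hence `α₁` decreases and `α₂` increases at the rate `c = λ/(a₁ - a₂)` while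
`α₁ + α₂ = λ/β` stays fixed. As `2 (α₁² + α₂²) = δ² + (λ/β)²` with `δ = α₁ - α₂`, the norm
decreases at the rate `√2 c δ / √(δ² + (λ/β)²)`, which is increasing in `δ > 0`; and
`a₁ + a₂ = γβ/ε` turns `y ≥ γλ/ε` into the uniform bound `δ ≥ γλ/(ε (a₁ - a₂)) > 0`. -/

noncomputable def nu1 (β γ ε : ℝ) : ℝ := (γ * β - Real.sqrt (γ^2 * β^2 - 4 * ε * β)) / 2
noncomputable def nu2 (β γ ε : ℝ) : ℝ := (γ * β + Real.sqrt (γ^2 * β^2 - 4 * ε * β)) / 2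

/-- The norm `‖u‖_*`: the Euclidean norm of the coordinates of `u` in the
eigenvector basis `v₁ = (β/ν₁, -1)`, `v₂ = (β/ν₂, -1)`. -/
noncomputable def starNorm (β γ ε : ℝ) (u : ℝ × ℝ) : ℝ :=
  let a1 := β / nu1 β γ ε
  let a2 := β / nu2 β γ ε
  let α1 := (u.1 + a2 * u.2) / (a1 - a2)
  let α2 := -u.2 - α1
  Real.sqrt (α1 ^ 2 + α2 ^ 2)
open MeasureTheory Set Filter

/-- A fluid model: locally Lipschitz pair `(y, x)` on `[0,∞)` with `x ≥ -λ/β`,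
satisfying the fluid ODE a.e. on `[0,∞)`. -/
def IsFluidModel (β γ ε lam : ℝ) (y x : ℝ → ℝ) : Prop :=
  (∀ T : ℝ, 0 < T → ∃ K : NNReal,
      LipschitzOnWith K y (Set.Icc 0 T) ∧ LipschitzOnWith K x (Set.Icc 0 T)) ∧
  (∀ t : ℝ, 0 ≤ t → -lam / β ≤ x t) ∧
  (∀ᵐ t ∂(volume.restrict (Set.Ici (0 : ℝ))),
    ∃ y' x' : ℝ, HasDerivAt y y' t ∧ HasDerivAt x x' t ∧
      (-lam / β < x t → y' = β * x t ∧ x' = -(γ * β * x t) - ε * y t) ∧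
      (x t = -lam / β → y' = -lam ∧ x' = max (γ * lam - ε * y t) 0))

section Eigenvalues

variable {β γ ε : ℝ}

theorem nu1_add_nu2 (β γ ε : ℝ) : nu1 β γ ε + nu2 β γ ε = γ * β := by
  unfold nu1 nu2; ring

theorem nu1_mul_nu2 (h : 0 ≤ γ ^ 2 * β ^ 2 - 4 * ε * β) : nu1 β γ ε * nu2 β γ ε = ε * β := by
  unfold nu1 nu2
  linear_combination (-1 / 4 : ℝ) * Real.sq_sqrt h

theorem nu1_lt_nu2 (h : 0 < γ ^ 2 * β ^ 2 - 4 * ε * β) : nu1 β γ ε < nu2 β γ ε := by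
  unfold nu1 nu2; linarith [Real.sqrt_pos.2 h]

theorem nu1_pos (hγβ : 0 < γ * β) (hεβ : 0 < ε * β) (h : 0 ≤ γ ^ 2 * β ^ 2 - 4 * ε * β) :
    0 < nu1 β γ ε := by
  have hsum := nu1_add_nu2 β γ ε
  have hprod := nu1_mul_nu2 h
  by_contra! hle
  nlinarith

theorem div_nu1_add_div_nu2 (hβ : β ≠ 0) (hε : ε ≠ 0) (h : 0 ≤ γ ^ 2 * β ^ 2 - 4 * ε * β) :
    β / nu1 β γ ε + β / nu2 β γ ε = γ * β / ε := by
  have hprod := nu1_mul_nu2 h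
  have hne : nu1 β γ ε * nu2 β γ ε ≠ 0 := by rw [hprod]; exact mul_ne_zero hε hβ
  rw [div_add_div _ _ (left_ne_zero_of_mul hne) (right_ne_zero_of_mul hne), hprod,
    div_eq_div_iff (mul_ne_zero hε hβ) hε]
  linear_combination β * ε * nu1_add_nu2 β γ ε

end Eigenvalues

theorem div_sqrt_sq_add_sq_le {a b m : ℝ} (ha : 0 < a) (hab : a ≤ b) :
    a / √(a ^ 2 + m ^ 2) ≤ b / √(b ^ 2 + m ^ 2) := by
  have hb : 0 < b := ha.trans_le hab
  rw [div_le_div_iff₀ (by positivity) (by positivity),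
    ← Real.sqrt_sq ha.le, ← Real.sqrt_sq hb.le, ← Real.sqrt_mul (sq_nonneg _),
    ← Real.sqrt_mul (sq_nonneg _), Real.sqrt_sq ha.le, Real.sqrt_sq hb.le]
  apply Real.sqrt_le_sqrt
  nlinarith [pow_le_pow_left₀ ha.le hab 2, sq_nonneg m]

theorem HasDerivAt.sqrt_sq_add_sq_of_add_eq {p q : ℝ → ℝ} {c m t : ℝ}
    (hp : HasDerivAt p (-c) t) (hq : HasDerivAt q c t) (hpq : p t + q t = m) (hm : m ≠ 0) :
    HasDerivAt (fun s => √(p s ^ 2 + q s ^ 2))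
      (-(√2 * c * ((p t - q t) / √((p t - q t) ^ 2 + m ^ 2)))) t := by
  have hnorm : √(p t ^ 2 + q t ^ 2) = √((p t - q t) ^ 2 + m ^ 2) / √2 := by
    rw [← Real.sqrt_div' _ zero_le_two, ← hpq]
    congr 1; ring
  have hpos : 0 < √((p t - q t) ^ 2 + m ^ 2) := by positivity
  have h := ((hp.fun_pow 2).fun_add (hq.fun_pow 2)).sqrt
    (Real.sqrt_pos.1 (by rw [hnorm]; positivity)).ne'
  convert h using 1
  rw [hnorm]
  field_simp
  push_cast
  ring_nf

theorem coord_gap_ge_of_boundary {a₁ a₂ β γ ε lam y x : ℝ} (hβ : β ≠ 0) (ha : a₂ < a₁)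
    (hsum : a₁ + a₂ = γ * β / ε) (hx : x = -lam / β) (hy : γ * lam / ε ≤ y) :
    γ * lam / (ε * (a₁ - a₂)) ≤ 2 * ((y + a₂ * x) / (a₁ - a₂)) + x := by
  have hD : 0 < a₁ - a₂ := sub_pos.2 ha
  have hsum' : (a₁ + a₂) * (lam / β) = γ * lam / ε := by
    rw [hsum]; field_simp
  have key : 2 * ((y + a₂ * x) / (a₁ - a₂)) + x = (2 * y - γ * lam / ε) / (a₁ - a₂) := by
    rw [hx, ← hsum']
    field_simp
    ring
  rw [key, ← div_div]
  gcongr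
  linarith

/-- Lemma 4.2(ii): on the boundary (with `y ≥ γλ/ε`), the
`‖·‖_*`-norm of a fluid model decreases at least at a constant rate. -/
theorem stmt_3 (β γ ε lam : ℝ) (hβ : 0 < β) (hγ : 0 < γ) (hε : 0 < ε)
    (hεbound : ε < γ ^ 2 * β / 4) (hlam : 0 < lam) :
    ∃ η₂ : ℝ, 0 < η₂ ∧
      ∀ y x : ℝ → ℝ, IsFluidModel β γ ε lam y x →
        ∀ᵐ t ∂(volume.restrict (Set.Ici (0 : ℝ))),
          (x t = -lam / β ∧ γ * lam / ε ≤ y t) →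
            ∃ d : ℝ, HasDerivAt (fun s => starNorm β γ ε (y s, x s)) d t ∧
              d ≤ -η₂ := by
  have hdisc : 0 < γ ^ 2 * β ^ 2 - 4 * ε * β := by nlinarith
  set a₁ := β / nu1 β γ ε
  set a₂ := β / nu2 β γ ε
  have ha : a₂ < a₁ := div_lt_div_of_pos_left hβ
    (nu1_pos (mul_pos hγ hβ) (mul_pos hε hβ) hdisc.le) (nu1_lt_nu2 hdisc)
  have hsum : a₁ + a₂ = γ * β / ε := div_nu1_add_div_nu2 hβ.ne' hε.ne' hdisc.le
  have hD : 0 < a₁ - a₂ := sub_pos.2 ha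
  set c := lam / (a₁ - a₂)
  set δ₀ := γ * lam / (ε * (a₁ - a₂))
  have hc : 0 < c := div_pos hlam hD
  have hδ₀ : 0 < δ₀ := div_pos (mul_pos hγ hlam) (mul_pos hε hD)
  refine ⟨√2 * c * (δ₀ / √(δ₀ ^ 2 + (lam / β) ^ 2)), by positivity, fun y x hfm => ?_⟩
  filter_upwards [hfm.2.2] with t ht
  rintro ⟨hxt, hyt⟩
  obtain ⟨y', x', hy, hx, -, hboundary⟩ := ht
  obtain ⟨rfl, rfl⟩ := hboundary hxt
  rw [max_eq_right (by linarith [(div_le_iff₀' hε).1 hyt])] at hx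
  set p := fun s => (y s + a₂ * x s) / (a₁ - a₂)
  have hp : HasDerivAt p (-c) t := by
    simpa [p, c, neg_div] using (hy.add (hx.const_mul a₂)).div_const (a₁ - a₂)
  have hq : HasDerivAt (fun s => -x s - p s) c t := by simpa using hx.fun_neg.fun_sub hp
  have hgap : δ₀ ≤ p t - (-x t - p t) := by
    linarith [coord_gap_ge_of_boundary hβ.ne' ha hsum hxt hyt]
  have hd := hp.sqrt_sq_add_sq_of_add_eq hq (m := lam / β) (by rw [hxt]; ring) (by positivity)
  refine ⟨_, hd, ?_⟩
  exact neg_le_neg (mul_le_mul_of_nonneg_left (div_sqrt_sq_add_sq_le hδ₀ hgap) (by positivity))
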